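/- For every typical weight λ, the operator T_{λ,λ} on L(λ)⊗L(λ) acts as the scalar a₁ = (−1)^{|λ|}q^{−(λ,λ)} on the subspace span{v₀⊗v₀, Δ(F)(v₀⊗v₀)} and as the scalar a₂ = (−1)^{|λ|+1}q^{−(λ,λ)+2(λ₁+λ₂)} on the subspace span{v₁⊗v₁, Δ(E)(v₁⊗v₁)}; moreover a₁ ≠ a₂, so T_{λ,λ} is not a scalar multiple of the identity. -/

import Mathlib

set_option synthInstance.maxHeartbeats 1000000
set_option maxHeartbeats 1000000
noncomputable section
open scoped TensorProduct

abbrev F : Type := RatFunc ℂ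
def q : F := RatFunc.X

/-- The quantum integer [n] = (qⁿ − q⁻ⁿ)/(q − q⁻¹). -/
def qn (n : ℤ) : F := (q ^ n - q ^ (-n)) / (q - q⁻¹)

abbrev V : Type := Fin 2 → F
def v0 : V := Pi.single 0 1
def v1 : V := Pi.single 1 1

def Eop : V →ₗ[F] V := Matrix.toLin' !![0, 1; 0, 0]
def Fop (l : ℤ × ℤ) : V →ₗ[F] V := Matrix.toLin' !![0, 0; qn (l.1 + l.2), 0]
def Qop (l : ℤ × ℤ) (h : ℤ × ℤ) : V →ₗ[F] V :=
  Matrix.toLin' !![q ^ (h.1 * l.1 + h.2 * l.2), 0; 0, q ^ (h.1 * (l.1 - 1) + h.2 * (l.2 + 1))]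
def Pop (l : ℤ × ℤ) : V →ₗ[F] V :=
  Matrix.toLin' !![(-1 : F) ^ l.2, 0; 0, (-1 : F) ^ (l.2 + 1)]
def Kop (l : ℤ × ℤ) : V →ₗ[F] V := Qop l (1, 1)
def Kinv (l : ℤ × ℤ) : V →ₗ[F] V := Qop l (-1, -1)

def ΔE (l m : ℤ × ℤ) : V ⊗[F] V →ₗ[F] V ⊗[F] V :=
  TensorProduct.map Eop (Kinv m) + TensorProduct.map (Pop l) Eop
def ΔF (l m : ℤ × ℤ) : V ⊗[F] V →ₗ[F] V ⊗[F] V :=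
  TensorProduct.map (Fop l) LinearMap.id + TensorProduct.map (Kop l ∘ₗ Pop l) (Fop m)
def ΔQ (l m : ℤ × ℤ) (h : ℤ × ℤ) : V ⊗[F] V →ₗ[F] V ⊗[F] V :=
  TensorProduct.map (Qop l h) (Qop m h)

def bV : Module.Basis (Fin 2) F V := Pi.basisFun F (Fin 2)
def bVV : Module.Basis (Fin 2 × Fin 2) F (V ⊗[F] V) := Module.Basis.tensorProduct bV bV

/-- `(λ,μ) = λ₁μ₁ − λ₂μ₂`. -/
def pr (a b : ℤ × ℤ) : ℤ := a.1 * b.1 - a.2 * b.2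
/-- `λ − α`. -/
def am (a : ℤ × ℤ) : ℤ × ℤ := (a.1 - 1, a.2 + 1)

/-- The operator `T_{λ,μ} : L(λ)⊗L(μ) → L(μ)⊗L(λ)` (the inverse braiding `Ř⁻¹`),
defined on the basis `v_i ⊗ v_j`; in each output the first factor lies in `L(μ)`. -/
def Tmap (l m : ℤ × ℤ) : V ⊗[F] V →ₗ[F] V ⊗[F] V :=
  bVV.constr F fun p =>
    !![ ((-1 : F) ^ (l.2 * m.2) * q ^ (-(pr m l))) • (v0 ⊗ₜ[F] v0),
        ((-1 : F) ^ (l.2 * (m.2 + 1)) * q ^ (-(pr (am m) l))) • (v1 ⊗ₜ[F] v0) ;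
        ((-1 : F) ^ ((l.2 + 1) * m.2)) •
          ( (q ^ (-(pr m (am l)))) • (v0 ⊗ₜ[F] v1)
            + ((-1 : F) ^ m.2 * q ^ (-(pr (am m) l)) * (q⁻¹ - q) * qn (m.1 + m.2))
              • (v1 ⊗ₜ[F] v0) ),
        ((-1 : F) ^ ((l.2 + 1) * (m.2 + 1)) * q ^ (-(pr (am m) (am l)))) • (v1 ⊗ₜ[F] v1) ]
      p.1 p.2

/-! For `λ = μ` everything is a computation in the basis `vᵢ ⊗ vⱼ`: `T_{λ,λ}` scales `v₀⊗v₀` and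
`v₁⊗v₁`, and `Δ(F)(v₀⊗v₀)`, `Δ(E)(v₁⊗v₁)` are eigenvectors in the invariant plane
`span{v₀⊗v₁, v₁⊗v₀}` once `(q⁻¹ - q)[n] = q⁻ⁿ - qⁿ` and `((-1)^|λ|)² = 1` are used. The two
eigenvalues differ by the factor `-q^{2(λ₁+λ₂)}`, which is never `1` because `q` is transcendental
over `ℂ`. -/

open TensorProduct

section

variable {α : Type*} [DivisionMonoid α] [HasDistribNeg α]

lemma neg_one_zpow_mul_self (k : ℤ) : (-1 : α) ^ (k * k) = (-1 : α) ^ k := by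
  rcases Int.even_or_odd k with h | h
  · rw [h.neg_one_zpow, (h.mul_left k).neg_one_zpow]
  · rw [h.neg_one_zpow, (h.mul h).neg_one_zpow]

lemma neg_one_zpow_mul_add_one (k : ℤ) : (-1 : α) ^ (k * (k + 1)) = 1 :=
  (Int.even_mul_succ_self k).neg_one_zpow

lemma neg_one_zpow_add_one_mul (k : ℤ) : (-1 : α) ^ ((k + 1) * k) = 1 := by
  rw [mul_comm, neg_one_zpow_mul_add_one]

lemma neg_one_zpow_mul_neg_one_zpow (k : ℤ) : (-1 : α) ^ k * (-1) ^ k = 1 := by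
  rcases Int.even_or_odd k with h | h
  · rw [h.neg_one_zpow, one_mul]
  · rw [h.neg_one_zpow, neg_one_mul, neg_neg]

end

section

variable {R M : Type*} [CommRing R] [AddCommGroup M] [Module R M]

lemma apply_eq_smul_of_mem_span_pair {f : Module.End R M} {a : R} {u w : M}
    (hu : f u = a • u) (hw : f w = a • w) : ∀ x ∈ Submodule.span R {u, w}, f x = a • x :=
  fun _ hx => Module.End.mem_eigenspace_iff.mp <| Submodule.span_le.mpr
    (Set.insert_subset_iff.mpr
      ⟨Module.End.mem_eigenspace_iff.mpr hu,
        Set.singleton_subset_iff.mpr (Module.End.mem_eigenspace_iff.mpr hw)⟩) hx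

lemma ne_smul_id_of_apply_eq_smul [IsDomain R] [Module.IsTorsionFree R M] {f : Module.End R M}
    {a b : R} {u w : M} (hu₀ : u ≠ 0) (hw₀ : w ≠ 0) (hu : f u = a • u) (hw : f w = b • w)
    (hab : a ≠ b) (c : R) : f ≠ c • LinearMap.id := by
  rintro rfl
  have hac : a = c := smul_left_injective R hu₀ hu.symm
  have hbc : b = c := smul_left_injective R hw₀ hw.symm
  exact hab (hac.trans hbc.symm)

end

lemma q_ne_zero : q ≠ 0 := RatFunc.X_ne_zero

lemma q_zpow_add (m n : ℤ) : q ^ (m + n) = q ^ m * q ^ n := zpow_add₀ q_ne_zero m n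

lemma q_zpow_mul_q_zpow_neg (n : ℤ) : q ^ n * q ^ (-n) = 1 := by
  rw [← q_zpow_add, add_neg_cancel, zpow_zero]

lemma q_pow_ne_one {n : ℕ} (hn : n ≠ 0) : q ^ n ≠ 1 := by
  intro h
  have hX : (Polynomial.X ^ n : Polynomial ℂ) = 1 := by
    apply IsFractionRing.injective (Polynomial ℂ) F
    simpa [q, RatFunc.algebraMap_X] using h
  simpa [hn] using congrArg Polynomial.natDegree hX

lemma q_zpow_eq_one_iff {n : ℤ} : q ^ n = 1 ↔ n = 0 := by
  refine ⟨fun h => ?_, fun h => by rw [h, zpow_zero]⟩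
  rcases n with m | m
  · by_contra hm
    exact q_pow_ne_one (n := m) (fun h0 => hm (by simp [h0])) (by simpa using h)
  · exact absurd (by simpa [zpow_negSucc] using h) (q_pow_ne_one m.succ_ne_zero)

lemma q_zpow_ne_neg_one (n : ℤ) : q ^ n ≠ -1 := by
  intro h
  have hn : n = 0 := by
    simpa using q_zpow_eq_one_iff.mp (by rw [mul_comm, zpow_mul, h]; norm_num : q ^ (2 * n) = 1)
  rw [hn, zpow_zero] at h
  norm_num at h

lemma q_sub_inv_ne_zero : q - q⁻¹ ≠ 0 := by
  intro h
  have : q ^ (2 : ℤ) = 1 := by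
    rw [sub_eq_zero] at h
    rw [zpow_two]
    nth_rw 2 [h]
    exact mul_inv_cancel₀ q_ne_zero
  exact absurd (q_zpow_eq_one_iff.mp this) two_ne_zero

lemma qn_mul_inv_sub (n : ℤ) : (q⁻¹ - q) * qn n = q ^ (-n) - q ^ n := by
  rw [qn, mul_div_assoc', div_eq_iff q_sub_inv_ne_zero]
  ring

lemma toLin'_v0 (M : Matrix (Fin 2) (Fin 2) F) : Matrix.toLin' M v0 = M 0 0 • v0 + M 1 0 • v1 := by
  ext i; fin_cases i <;> simp [v0, v1, Matrix.mulVec, dotProduct, Fin.sum_univ_two]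

lemma toLin'_v1 (M : Matrix (Fin 2) (Fin 2) F) : Matrix.toLin' M v1 = M 0 1 • v0 + M 1 1 • v1 := by
  ext i; fin_cases i <;> simp [v0, v1, Matrix.mulVec, dotProduct, Fin.sum_univ_two]

lemma Eop_v1 : Eop v1 = v0 := by rw [Eop, toLin'_v1]; simp

lemma Fop_v0 (l : ℤ × ℤ) : Fop l v0 = qn (l.1 + l.2) • v1 := by rw [Fop, toLin'_v0]; simp

lemma Pop_v0 (l : ℤ × ℤ) : Pop l v0 = (-1 : F) ^ l.2 • v0 := by rw [Pop, toLin'_v0]; simp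

lemma Pop_v1 (l : ℤ × ℤ) : Pop l v1 = (-1 : F) ^ (l.2 + 1) • v1 := by rw [Pop, toLin'_v1]; simp

lemma Kop_v0 (l : ℤ × ℤ) : Kop l v0 = q ^ (l.1 + l.2) • v0 := by rw [Kop, Qop, toLin'_v0]; simp

lemma Kinv_v1 (l : ℤ × ℤ) : Kinv l v1 = q ^ (-(l.1 + l.2)) • v1 := by
  rw [Kinv, Qop, toLin'_v1, show ((-1, -1) : ℤ × ℤ).1 * (l.1 - 1) + ((-1, -1) : ℤ × ℤ).2 * (l.2 + 1)
    = -(l.1 + l.2) by ring]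
  simp

lemma ΔF_v0_tmul_v0 (l m : ℤ × ℤ) :
    ΔF l m (v0 ⊗ₜ v0) = qn (l.1 + l.2) • (v1 ⊗ₜ v0)
      + ((-1 : F) ^ l.2 * q ^ (l.1 + l.2) * qn (m.1 + m.2)) • (v0 ⊗ₜ v1) := by
  simp only [ΔF, LinearMap.add_apply, map_tmul, LinearMap.comp_apply, LinearMap.id_apply, Fop_v0,
    Pop_v0, map_smul, Kop_v0, smul_tmul', tmul_smul, smul_smul, mul_comm (qn (m.1 + m.2))]

lemma ΔE_v1_tmul_v1 (l m : ℤ × ℤ) :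
    ΔE l m (v1 ⊗ₜ v1) = q ^ (-(m.1 + m.2)) • (v0 ⊗ₜ v1) + (-1 : F) ^ (l.2 + 1) • (v1 ⊗ₜ v0) := by
  simp only [ΔE, LinearMap.add_apply, map_tmul, Eop_v1, Kinv_v1, Pop_v1, tmul_smul, smul_tmul']

lemma pr_am_left (l : ℤ × ℤ) : -pr (am l) l = -pr l l + (l.1 + l.2) := by simp only [pr, am]; ring

lemma pr_am_right (l : ℤ × ℤ) : -pr l (am l) = -pr l l + (l.1 + l.2) := by simp only [pr, am]; ring

lemma pr_am_am (l : ℤ × ℤ) : -pr (am l) (am l) = -pr l l + 2 * (l.1 + l.2) := by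
  simp only [pr, am]; ring

lemma bVV_apply (i j : Fin 2) : bVV (i, j) = Pi.single i 1 ⊗ₜ Pi.single j 1 := by
  simp [bVV, bV]

lemma v0_tmul_v0_ne_zero : v0 ⊗ₜ[F] v0 ≠ 0 := by
  rw [v0, ← bVV_apply]; exact bVV.ne_zero _

lemma v1_tmul_v1_ne_zero : v1 ⊗ₜ[F] v1 ≠ 0 := by
  rw [v1, ← bVV_apply]; exact bVV.ne_zero _

lemma Tmap_v0_tmul_v0 (l : ℤ × ℤ) :
    Tmap l l (v0 ⊗ₜ v0) = ((-1 : F) ^ l.2 * q ^ (-pr l l)) • (v0 ⊗ₜ v0) := by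
  conv_lhs => rw [v0, ← bVV_apply, Tmap, Module.Basis.constr_basis]
  simp [neg_one_zpow_mul_self]

lemma Tmap_v0_tmul_v1 (l : ℤ × ℤ) :
    Tmap l l (v0 ⊗ₜ v1) = q ^ (-pr l l + (l.1 + l.2)) • (v1 ⊗ₜ v0) := by
  conv_lhs => rw [v0, v1, ← bVV_apply, Tmap, Module.Basis.constr_basis]
  simp [neg_one_zpow_mul_add_one, pr_am_left]

lemma Tmap_v1_tmul_v0 (l : ℤ × ℤ) :
    Tmap l l (v1 ⊗ₜ v0) = q ^ (-pr l l + (l.1 + l.2)) • (v0 ⊗ₜ v1)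
      + ((-1 : F) ^ l.2 * q ^ (-pr l l + (l.1 + l.2)) * (q ^ (-(l.1 + l.2)) - q ^ (l.1 + l.2)))
        • (v1 ⊗ₜ v0) := by
  conv_lhs => rw [v0, v1, ← bVV_apply, Tmap, Module.Basis.constr_basis]
  simp [neg_one_zpow_add_one_mul, pr_am_left, pr_am_right, mul_assoc, qn_mul_inv_sub]

lemma Tmap_v1_tmul_v1 (l : ℤ × ℤ) :
    Tmap l l (v1 ⊗ₜ v1)
      = ((-1 : F) ^ (l.2 + 1) * q ^ (-pr l l + 2 * (l.1 + l.2))) • (v1 ⊗ₜ v1) := by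
  conv_lhs => rw [v1, ← bVV_apply, Tmap, Module.Basis.constr_basis]
  simp [neg_one_zpow_mul_self, pr_am_am]

section Eigenvectors

-- `module` needs the ℕ- and ℤ-algebra structures on `F` to be reducibly the generic ones, and
-- `RatFunc` carries its own.
attribute [local instance 2000] Semiring.toNatAlgebra Ring.toIntAlgebra

lemma Tmap_ΔF_v0_tmul_v0 (l : ℤ × ℤ) :
    Tmap l l (ΔF l l (v0 ⊗ₜ v0)) = ((-1 : F) ^ l.2 * q ^ (-pr l l)) • ΔF l l (v0 ⊗ₜ v0) := by
  rw [ΔF_v0_tmul_v0, map_add, map_smul, map_smul, Tmap_v1_tmul_v0, Tmap_v0_tmul_v1,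
    q_zpow_add (-pr l l)]
  have hs := neg_one_zpow_mul_neg_one_zpow (α := F) l.2
  have hq := q_zpow_mul_q_zpow_neg (l.1 + l.2)
  generalize (-1 : F) ^ l.2 = s at *
  generalize q ^ (l.1 + l.2) = A at *
  generalize q ^ (-(l.1 + l.2)) = B at *
  linear_combination (norm := module)
    (-(qn (l.1 + l.2) * q ^ (-pr l l) * A)) • hs • (v0 ⊗ₜ[F] v1)
      + (s * qn (l.1 + l.2) * q ^ (-pr l l)) • hq • (v1 ⊗ₜ[F] v0)

lemma Tmap_ΔE_v1_tmul_v1 (l : ℤ × ℤ) :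
    Tmap l l (ΔE l l (v1 ⊗ₜ v1))
      = ((-1 : F) ^ (l.2 + 1) * q ^ (-pr l l + 2 * (l.1 + l.2))) • ΔE l l (v1 ⊗ₜ v1) := by
  rw [ΔE_v1_tmul_v1, map_add, map_smul, map_smul, Tmap_v1_tmul_v0, Tmap_v0_tmul_v1,
    zpow_add_one₀ (by norm_num), q_zpow_add (-pr l l), q_zpow_add (-pr l l), two_mul,
    q_zpow_add (l.1 + l.2)]
  have hs := neg_one_zpow_mul_neg_one_zpow (α := F) l.2
  have hq := q_zpow_mul_q_zpow_neg (l.1 + l.2)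
  generalize (-1 : F) ^ l.2 = s at *
  generalize q ^ (l.1 + l.2) = A at *
  generalize q ^ (-(l.1 + l.2)) = B at *
  linear_combination (norm := module)
    (s * q ^ (-pr l l) * A) • hq • (v0 ⊗ₜ[F] v1)
      - (q ^ (-pr l l) * A * B) • hs • (v1 ⊗ₜ[F] v0)

end Eigenvectors

lemma Tmap_eigenvalues_ne (l : ℤ × ℤ) :
    (-1 : F) ^ l.2 * q ^ (-pr l l) ≠ (-1 : F) ^ (l.2 + 1) * q ^ (-pr l l + 2 * (l.1 + l.2)) := by
  intro h
  rw [zpow_add_one₀ (by norm_num), q_zpow_add] at h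
  have hprod : (-1 : F) ^ l.2 * q ^ (-pr l l) * (1 + q ^ (2 * (l.1 + l.2))) = 0 := by
    linear_combination h
  have hne : (-1 : F) ^ l.2 * q ^ (-pr l l) ≠ 0 :=
    mul_ne_zero (zpow_ne_zero _ (by norm_num)) (zpow_ne_zero _ q_ne_zero)
  exact q_zpow_ne_neg_one _
    (eq_neg_of_add_eq_zero_right ((mul_eq_zero.mp hprod).resolve_left hne))

theorem Tmap_two_eigenvalues_general (l : ℤ × ℤ) :
    let a₁ : F := (-1 : F) ^ l.2 * q ^ (-(pr l l))
    let a₂ : F := (-1 : F) ^ (l.2 + 1) * q ^ (-(pr l l) + 2 * (l.1 + l.2))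
    (∀ x ∈ Submodule.span F {v0 ⊗ₜ[F] v0, ΔF l l (v0 ⊗ₜ[F] v0)}, Tmap l l x = a₁ • x) ∧
    (∀ x ∈ Submodule.span F {v1 ⊗ₜ[F] v1, ΔE l l (v1 ⊗ₜ[F] v1)}, Tmap l l x = a₂ • x) ∧
    a₁ ≠ a₂ ∧
    ∀ c : F, Tmap l l ≠ c • LinearMap.id :=
  ⟨apply_eq_smul_of_mem_span_pair (Tmap_v0_tmul_v0 l) (Tmap_ΔF_v0_tmul_v0 l),
    apply_eq_smul_of_mem_span_pair (Tmap_v1_tmul_v1 l) (Tmap_ΔE_v1_tmul_v1 l),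
    Tmap_eigenvalues_ne l,
    ne_smul_id_of_apply_eq_smul v0_tmul_v0_ne_zero v1_tmul_v1_ne_zero (Tmap_v0_tmul_v0 l)
      (Tmap_v1_tmul_v1 l) (Tmap_eigenvalues_ne l)⟩

/-- on `L(λ)⊗L(λ)` the operator `T_{λ,λ}` acts by the scalar
`a₁ = (−1)^{|λ|}q^{−(λ,λ)}` on `span{v₀⊗v₀, Δ(F)(v₀⊗v₀)}` and by the scalar
`a₂ = (−1)^{|λ|+1}q^{−(λ,λ)+2(λ₁+λ₂)}` on `span{v₁⊗v₁, Δ(E)(v₁⊗v₁)}`; moreover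
`a₁ ≠ a₂`, so `T_{λ,λ}` is not a scalar multiple of the identity. -/
theorem Tmap_two_eigenvalues (l : ℤ × ℤ) (hl : l.1 + l.2 ≠ 0) :
    let a₁ : F := (-1 : F) ^ l.2 * q ^ (-(pr l l))
    let a₂ : F := (-1 : F) ^ (l.2 + 1) * q ^ (-(pr l l) + 2 * (l.1 + l.2))
    (∀ x ∈ Submodule.span F {v0 ⊗ₜ[F] v0, ΔF l l (v0 ⊗ₜ[F] v0)}, Tmap l l x = a₁ • x) ∧
    (∀ x ∈ Submodule.span F {v1 ⊗ₜ[F] v1, ΔE l l (v1 ⊗ₜ[F] v1)}, Tmap l l x = a₂ • x) ∧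
    a₁ ≠ a₂ ∧
    ∀ c : F, Tmap l l ≠ c • LinearMap.id :=
  Tmap_two_eigenvalues_general l
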